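/- Bellman update for the Expected Divergence Point (Theorem 1): Assume that divergence is almost sure from every state, i.e. Σ_{n=1}^∞ p_n(s') = 1 for every state s'. Then for every state s, EDP(s) = [1 - Σ_{a ∈ A'(s)} π2(s,a)] + Σ_{a ∈ A'(s)} π2(s,a) · Σ_{s' ∈ S} T(s,a,s') · (1 + EDP(s')), where all quantities are computed in the extended nonnegative reals ℝ≥0∞. -/
import Mathlib


open scoped ENNReal Classical BigOperators

/-- The divergence probability `pdiv π1 π2 T n s`: the probability that a trajectory
sampled from `π2` (with transitions `T`), starting at state `s`, first takes an action
assigned zero probability by `π1` exactly at timestep `n` (`n ≥ 1`; `pdiv 0` is set to `0`).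
It is the sum over all sequences `a_1, s_1, …, s_{n-1}, a_n` (with `s_0 = s`,
`a_k ∈ A'(s_{k-1}) = {a | π1 s_{k-1} a ≠ 0}` for `k < n`, and `a_n ∉ A'(s_{n-1})`) of
`π2(s_0,a_1)·T(s_0,a_1,s_1)·… ·T(s_{n-2},a_{n-1},s_{n-1})·π2(s_{n-1},a_n)`. -/
noncomputable def pdiv {S A : Type*} [Fintype S] [Fintype A]
    (π1 π2 : S → A → ℝ≥0∞) (T : S → A → S → ℝ≥0∞) : ℕ → S → ℝ≥0∞
  | 0, _ => 0
  | n + 1, s =>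
      ∑ a : Fin (n + 1) → A, ∑ σ : Fin n → S,
        (∏ k : Fin n,
            if π1 ((Fin.cons s σ : Fin (n + 1) → S) k.castSucc) (a k.castSucc) ≠ 0 then
              π2 ((Fin.cons s σ : Fin (n + 1) → S) k.castSucc) (a k.castSucc) *
                T ((Fin.cons s σ : Fin (n + 1) → S) k.castSucc) (a k.castSucc)
                  ((Fin.cons s σ : Fin (n + 1) → S) k.succ)
            else 0) *
          (if π1 ((Fin.cons s σ : Fin (n + 1) → S) (Fin.last n)) (a (Fin.last n)) = 0 then
              π2 ((Fin.cons s σ : Fin (n + 1) → S) (Fin.last n)) (a (Fin.last n))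
            else 0)

/-- The survival probability `surv π1 π2 T N s`: the probability that the first `N` actions
sampled from `π2` (with transitions `T`), starting at state `s`, are all `π1`-consistent.
It is the sum over all sequences `a_1, s_1, …, a_N, s_N` (with `s_0 = s` and
`a_k ∈ A'(s_{k-1}) = {a | π1 s_{k-1} a ≠ 0}` for all `1 ≤ k ≤ N`) of
`π2(s_0,a_1)·T(s_0,a_1,s_1)·… ·π2(s_{N-1},a_N)·T(s_{N-1},a_N,s_N)`. -/
noncomputable def surv {S A : Type*} [Fintype S] [Fintype A]
    (π1 π2 : S → A → ℝ≥0∞) (T : S → A → S → ℝ≥0∞) (N : ℕ) (s : S) : ℝ≥0∞ :=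
  ∑ a : Fin N → A, ∑ σ : Fin N → S,
    ∏ k : Fin N,
      if π1 ((Fin.cons s σ : Fin (N + 1) → S) k.castSucc) (a k) ≠ 0 then
        π2 ((Fin.cons s σ : Fin (N + 1) → S) k.castSucc) (a k) *
          T ((Fin.cons s σ : Fin (N + 1) → S) k.castSucc) (a k)
            ((Fin.cons s σ : Fin (N + 1) → S) k.succ)
      else 0

/-- The Expected Divergence Point `EDP(s, π1 | π2) = Σ_{n=1}^∞ n · p_n(s)`,
valued in `ℝ≥0∞`. -/
noncomputable def EDP {S A : Type*} [Fintype S] [Fintype A]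
    (π1 π2 : S → A → ℝ≥0∞) (T : S → A → S → ℝ≥0∞) (s : S) : ℝ≥0∞ :=
  ∑' n : ℕ, ((n + 1 : ℕ) : ℝ≥0∞) * pdiv π1 π2 T (n + 1) s

section EDPAux
variable {S A : Type*} [Fintype S] [Fintype A]

private lemma sum_pi_succ {β M : Type*} [Fintype β] [AddCommMonoid M] (n : ℕ)
    (f : (Fin (n+1) → β) → M) :
    ∑ g : Fin (n+1) → β, f g = ∑ x : β, ∑ g : Fin n → β, f (Fin.cons x g) := by
  rw [← (Fin.consEquiv fun _ => β).sum_comp f, Fintype.sum_prod_type]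
  rfl

private lemma pdiv_one (π1 π2 : S → A → ℝ≥0∞) (T : S → A → S → ℝ≥0∞) (s : S) :
    pdiv π1 π2 T 1 s = ∑ a : A, if π1 s a = 0 then π2 s a else 0 := by
  show (∑ a : Fin 1 → A, ∑ σ : Fin 0 → S, _) = _
  rw [sum_pi_succ 0 (β := A)]
  simp [Fin.last]

private lemma pdiv_succ_succ (π1 π2 : S → A → ℝ≥0∞) (T : S → A → S → ℝ≥0∞) (n : ℕ) (s : S) :
    pdiv π1 π2 T (n+2) s =
      ∑ a : A, ∑ s1 : S, (if π1 s a ≠ 0 then π2 s a * T s a s1 else 0) *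
        pdiv π1 π2 T (n+1) s1 := by
  show (∑ a : Fin (n+2) → A, ∑ σ : Fin (n+1) → S, _) = _
  rw [sum_pi_succ (n+1) (β := A)]
  refine Finset.sum_congr rfl fun a0 _ => ?_
  rw [Finset.sum_comm]
  rw [sum_pi_succ n (β := S)]
  refine Finset.sum_congr rfl fun s1 _ => ?_
  show (∑ σ' : Fin n → S, ∑ a' : Fin (n+1) → A, _) = _
  rw [Finset.sum_comm]
  show (∑ a' : Fin (n+1) → A, ∑ σ' : Fin n → S, _) = _
  conv_rhs => rw [pdiv]
  rw [Finset.mul_sum]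
  refine Finset.sum_congr rfl fun a' _ => ?_
  rw [Finset.mul_sum]
  refine Finset.sum_congr rfl fun σ' _ => ?_
  rw [Fin.prod_univ_succ]
  simp only [Fin.castSucc_zero, Fin.cons_zero, Fin.cons_succ, Fin.succ_castSucc,
    Fin.succ_last]
  simp only [← Fin.succ_castSucc, ← Fin.succ_last, Fin.cons_succ]
  ring

end EDPAux

/-- **Bellman update for the Expected Divergence Point (Theorem 1).**
Assuming divergence is almost sure from every state (`Σ_{n=1}^∞ p_n(s') = 1` for all `s'`),
for every state `s`:
`EDP(s) = [1 - Σ_{a ∈ A'(s)} π2(s,a)] + Σ_{a ∈ A'(s)} π2(s,a) · Σ_{s'} T(s,a,s') · (1 + EDP(s'))`,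
where `A'(s) = {a | π1(s,a) ≠ 0}` and all quantities live in `ℝ≥0∞`. -/

theorem edp_bellman_update {S A : Type*} [Fintype S] [Fintype A] [Nonempty S] [Nonempty A]
    (π1 π2 : S → A → ℝ≥0∞) (T : S → A → S → ℝ≥0∞)
    (hπ1 : ∀ s, ∑ a : A, π1 s a = 1) (hπ2 : ∀ s, ∑ a : A, π2 s a = 1)
    (hT : ∀ s a, ∑ s' : S, T s a s' = 1)
    (hdiv : ∀ s' : S, ∑' n : ℕ, pdiv π1 π2 T (n + 1) s' = 1) (s : S) :
    EDP π1 π2 T s =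
      (1 - ∑ a ∈ Finset.univ.filter (fun a => π1 s a ≠ 0), π2 s a) +
        ∑ a ∈ Finset.univ.filter (fun a => π1 s a ≠ 0),
          π2 s a * ∑ s' : S, T s a s' * (1 + EDP π1 π2 T s') := by
  -- step A: pdiv 1 s = 1 - ∑_{A'} π2
  have hsumF : ∑ a ∈ Finset.univ.filter (fun a => π1 s a ≠ 0), π2 s a ≠ ∞ := by
    have hle : ∑ a ∈ Finset.univ.filter (fun a => π1 s a ≠ 0), π2 s a ≤ 1 := by
      rw [← hπ2 s]
      exact Finset.sum_le_sum_of_subset (Finset.filter_subset _ _)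
    exact (lt_of_le_of_lt hle ENNReal.one_lt_top).ne
  have hA : pdiv π1 π2 T 1 s =
      1 - ∑ a ∈ Finset.univ.filter (fun a => π1 s a ≠ 0), π2 s a := by
    refine ENNReal.eq_sub_of_add_eq hsumF ?_
    rw [pdiv_one]
    rw [← hπ2 s, ← Finset.sum_filter_add_sum_filter_not Finset.univ
      (fun a => π1 s a ≠ 0) (π2 s)]
    rw [add_comm]
    congr 1
    rw [Finset.sum_filter]
    simp
  -- step B/C
  have key : ∀ s1 : S, ∑' n : ℕ, ((n + 2 : ℕ) : ℝ≥0∞) * pdiv π1 π2 T (n + 1) s1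
      = 1 + EDP π1 π2 T s1 := by
    intro s1
    have : ∀ n : ℕ, ((n + 2 : ℕ) : ℝ≥0∞) * pdiv π1 π2 T (n + 1) s1 =
        ((n + 1 : ℕ) : ℝ≥0∞) * pdiv π1 π2 T (n + 1) s1 + pdiv π1 π2 T (n + 1) s1 := by
      intro n
      push_cast
      ring
    rw [tsum_congr this, ENNReal.tsum_add, hdiv s1, EDP, add_comm]
  rw [EDP, tsum_eq_zero_add' ENNReal.summable]
  simp only [Nat.cast_one, one_mul, Nat.cast_zero, zero_add]
  rw [hA]
  congr 1
  calc ∑' n : ℕ, ((n + 1 + 1 : ℕ) : ℝ≥0∞) * pdiv π1 π2 T (n + 1 + 1) s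
      = ∑' n : ℕ, ∑ a : A, ∑ s1 : S, ((if π1 s a ≠ 0 then π2 s a * T s a s1 else 0) *
          (((n + 2 : ℕ) : ℝ≥0∞) * pdiv π1 π2 T (n + 1) s1)) := by
        refine tsum_congr fun n => ?_
        rw [pdiv_succ_succ, Finset.mul_sum]
        refine Finset.sum_congr rfl fun a _ => ?_
        rw [Finset.mul_sum]
        refine Finset.sum_congr rfl fun s1 _ => ?_
        ring
    _ = ∑ a : A, ∑ s1 : S, (if π1 s a ≠ 0 then π2 s a * T s a s1 else 0) *
          (1 + EDP π1 π2 T s1) := by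
        rw [Summable.tsum_finsetSum (fun _ _ => ENNReal.summable)]
        refine Finset.sum_congr rfl fun a _ => ?_
        rw [Summable.tsum_finsetSum (fun _ _ => ENNReal.summable)]
        refine Finset.sum_congr rfl fun s1 _ => ?_
        rw [ENNReal.tsum_mul_left, key s1]
    _ = ∑ a ∈ Finset.univ.filter (fun a => π1 s a ≠ 0),
          π2 s a * ∑ s' : S, T s a s' * (1 + EDP π1 π2 T s') := by
        rw [Finset.sum_filter]
        refine Finset.sum_congr rfl fun a _ => ?_
        by_cases h : π1 s a ≠ 0
        · simp only [if_pos h]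
          rw [Finset.mul_sum]
          exact Finset.sum_congr rfl fun s1 _ => by ring
        · simp [h]
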